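/- arXiv:math/0508199 — 5 statements merged into one kernel-verified Lean document; each statement's English description precedes it below -/
import Mathlib

section
/- Let P ⊆ ℝ^k and f_P : P → ℝ. Then f_P is nonstrictly increasing on P (i.e., x < y with x, y ∈ P implies f_P(x) ≤ f_P(y)) if and only if b(x) ≥ a(x) for all x ∈ ℝ^k, where a(x) = sup{f_P(y) : y ∈ P, y ≤ x} and b(x) = inf{f_P(z) : z ∈ P, z ≥ x} in the extended reals. -/
open Set

noncomputable def aF {α : Type*} [Preorder α] (P : Set α) (f : α → ℝ) (x : α) : EReal :=
  sSup ((fun y => (f y : EReal)) '' {y ∈ P | y ≤ x})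

noncomputable def bF {α : Type*} [Preorder α] (P : Set α) (f : α → ℝ) (x : α) : EReal :=
  sInf ((fun z => (f z : EReal)) '' {z ∈ P | x ≤ z})


theorem stmt_1 {k : ℕ} (P : Set (Fin k → ℝ)) (fP : (Fin k → ℝ) → ℝ) :
    (∀ x ∈ P, ∀ y ∈ P, x < y → fP x ≤ fP y) ↔
      ∀ x : Fin k → ℝ, aF P fP x ≤ bF P fP x := by
  constructor
  · intro h x
    apply sSup_le
    rintro _ ⟨y, ⟨hyP, hyx⟩, rfl⟩
    apply le_sInf
    rintro _ ⟨z, ⟨hzP, hxz⟩, rfl⟩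
    have hyz : y ≤ z := hyx.trans hxz
    rcases eq_or_lt_of_le hyz with rfl | hlt
    · exact le_refl _
    · simp only []
      exact_mod_cast h y hyP z hzP hlt
  · intro h x hx y hy hxy
    have h1 : (fP x : EReal) ≤ aF P fP x :=
      le_sSup ⟨x, ⟨hx, le_refl x⟩, rfl⟩
    have h2 : bF P fP x ≤ (fP y : EReal) :=
      sInf_le ⟨y, ⟨hy, hxy.le⟩, rfl⟩
    exact_mod_cast h1.trans ((h x).trans h2)
end

section
/- Let P ⊆ ℝ^k and let f_P : P → ℝ be separably increasing. Then for every x ∈ P, a(x) = b(x) = f_P(x) (as extended reals). -/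
open Set

theorem stmt_4 {k : ℕ} (P : Set (Fin k → ℝ)) (fP : (Fin k → ℝ) → ℝ)
    (hsep : ∀ x x' : Fin k → ℝ, x < x' → aF P fP x < bF P fP x') :
    ∀ x ∈ P, aF P fP x = (fP x : EReal) ∧ bF P fP x = (fP x : EReal) := by
  intro x hx
  have hax : (fP x : EReal) ≤ aF P fP x :=
    le_sSup ⟨x, ⟨hx, le_refl x⟩, rfl⟩
  have hbx : bF P fP x ≤ (fP x : EReal) :=
    sInf_le ⟨x, ⟨hx, le_refl x⟩, rfl⟩
  constructor
  · refine le_antisymm ?_ hax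
    refine sSup_le ?_
    rintro _ ⟨y, ⟨hyP, hyx⟩, rfl⟩
    rcases hyx.lt_or_eq with hlt | heq
    · have h1 : (fP y : EReal) ≤ aF P fP y := le_sSup ⟨y, ⟨hyP, le_refl y⟩, rfl⟩
      exact h1.trans ((hsep y x hlt).le.trans hbx)
    · simp [heq]
  · refine le_antisymm hbx ?_
    refine le_sInf ?_
    rintro _ ⟨z, ⟨hzP, hxz⟩, rfl⟩
    rcases hxz.lt_or_eq with hlt | heq
    · have h1 : bF P fP z ≤ (fP z : EReal) := sInf_le ⟨z, ⟨hzP, le_refl z⟩, rfl⟩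
      exact (hax.trans (hsep x z hlt).le).trans h1
    · simp [heq]
end

section
/- The function f_P on P = (-∞, 0] ∪ (1, +∞) ⊂ ℝ defined by f_P(x) = x for x ≤ 0 and f_P(x) = x - 1 for x > 1 is strictly increasing, upper-bounded on lower sets, and lower-bounded on upper sets, but is not separably increasing: specifically b(1) = 0 = a(0) while 1 > 0. -/
open Set

/-- The counterexample (7) of the paper: `P = (-∞,0] ∪ (1,+∞)`, `f_P(x) = x` on `(-∞,0]`
and `f_P(x) = x - 1` on `(1,+∞)`. It is strictly increasing and bounded above on lower
sets and below on upper sets, yet `b(1) = 0 = a(0)` with `0 < 1`, so it is not separably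
increasing. -/
theorem stmt_6 :
    let P : Set ℝ := Iic 0 ∪ Ioi 1
    let fP : ℝ → ℝ := fun x => if x ≤ 0 then x else x - 1
    StrictMonoOn fP P ∧
    (∀ c : ℝ, BddAbove (fP '' {x ∈ P | x ≤ c}) ∧ BddBelow (fP '' {x ∈ P | c ≤ x})) ∧
    bF P fP 1 = (0 : EReal) ∧ aF P fP 0 = (0 : EReal) ∧
    ¬ (∀ x x' : ℝ, x < x' → aF P fP x < bF P fP x') := by
  intro P fP
  have hb : bF P fP 1 = (0 : EReal) := by
    have hset : {z ∈ P | (1:ℝ) ≤ z} = Ioi 1 := by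
      ext z
      simp only [mem_setOf_eq, mem_Ioi, P, mem_union, mem_Iic]
      constructor
      · rintro ⟨hz | hz, h1⟩
        · linarith
        · exact hz
      · intro hz; exact ⟨Or.inr hz, le_of_lt hz⟩
    have : IsGLB ((fun z => (fP z : EReal)) '' {z ∈ P | (1:ℝ) ≤ z}) 0 := by
      rw [hset]
      constructor
      · rintro v ⟨z, hz, rfl⟩
        simp only [mem_Ioi] at hz
        have h0 : ¬ z ≤ 0 := by linarith
        simp only [fP, if_neg h0]
        exact_mod_cast by linarith
      · intro b hb
        by_contra h
        push_neg at h
        obtain ⟨a, ha0, hab⟩ := EReal.exists_between_coe_real h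
        have ha0' : (0:ℝ) < a := by exact_mod_cast ha0
        have hz : (1 + a/2 : ℝ) ∈ Ioi (1:ℝ) := by simp [mem_Ioi]; linarith
        have := hb ⟨1 + a/2, hz, rfl⟩
        have h0 : ¬ (1 + a/2 : ℝ) ≤ 0 := by linarith
        simp only [fP, if_neg h0] at this
        have : b ≤ ((a/2 : ℝ) : EReal) := by
          convert this using 2; ring
        have h2 : ((a/2 : ℝ) : EReal) < (a : EReal) := by exact_mod_cast by linarith
        exact absurd (lt_of_le_of_lt this (h2.trans hab)) (lt_irrefl b)
    exact this.sInf_eq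
  have ha : aF P fP 0 = (0 : EReal) := by
    have hset : {y ∈ P | y ≤ (0:ℝ)} = Iic 0 := by
      ext y
      simp only [mem_setOf_eq, mem_Iic, P, mem_union, mem_Ioi]
      constructor
      · rintro ⟨_, h⟩; exact h
      · intro h; exact ⟨Or.inl h, h⟩
    have : IsGreatest ((fun y => (fP y : EReal)) '' {y ∈ P | y ≤ (0:ℝ)}) 0 := by
      rw [hset]
      constructor
      · refine ⟨0, by simp, ?_⟩
        simp [fP]
      · rintro v ⟨y, hy, rfl⟩
        simp only [mem_Iic] at hy
        simp only [fP, if_pos hy]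
        exact_mod_cast hy
    exact this.isLUB.sSup_eq
  refine ⟨?_, ?_, hb, ha, ?_⟩
  · intro x hx y hy hxy
    simp only [fP]
    by_cases h1 : y ≤ 0
    · rw [if_pos (le_of_lt (lt_of_lt_of_le hxy h1)), if_pos h1]; exact hxy
    · rw [if_neg h1]
      have hy1 : 1 < y := by
        rcases hy with h | h
        · exact absurd h h1
        · exact h
      by_cases h2 : x ≤ 0
      · rw [if_pos h2]; linarith
      · rw [if_neg h2]
        linarith
  · intro c
    constructor
    · refine ⟨c, ?_⟩
      rintro v ⟨x, ⟨_, hxc⟩, rfl⟩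
      simp only [fP]
      split <;> linarith
    · refine ⟨c - 1, ?_⟩
      rintro v ⟨x, ⟨_, hxc⟩, rfl⟩
      simp only [fP]
      split <;> linarith
  · intro h
    have := h 0 1 (by norm_num)
    rw [ha, hb] at this
    exact lt_irrefl _ this
end

section
/- Let P ⊂ ℝ^k be a Pareto set (no two distinct elements of P are comparable under the Paretian order) and f_P : P → ℝ any function. Then f_P is separably increasing if and only if f_P is upper-bounded on every lower set {x ∈ P : x ≤ a} and lower-bounded on every upper set {x ∈ P : x ≥ a}, a ∈ ℝ^k. -/
open Set

lemma sSup_coe_lt_top_iff {α : Type*} (f : α → ℝ) (S : Set α) :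
    sSup ((fun y => (f y : EReal)) '' S) < ⊤ ↔ BddAbove (f '' S) := by
  constructor
  · intro h
    cases hs : sSup ((fun y => (f y : EReal)) '' S) with
    | bot =>
      have : S = ∅ := by
        by_contra hne
        obtain ⟨y, hy⟩ := Set.nonempty_iff_ne_empty.mpr hne
        have hle : (f y : EReal) ≤ ⊥ := hs ▸ le_sSup ⟨y, hy, rfl⟩
        exact absurd (le_bot_iff.mp hle) (EReal.coe_ne_bot _)
      simp [this]
    | top => simp [hs] at h
    | coe r =>
      refine ⟨r, ?_⟩
      rintro _ ⟨y, hy, rfl⟩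
      have hle : (f y : EReal) ≤ (r : EReal) := hs ▸ le_sSup ⟨y, hy, rfl⟩
      exact_mod_cast hle
  · rintro ⟨M, hM⟩
    refine lt_of_le_of_lt (b := (M : EReal)) ?_ (EReal.coe_lt_top M)
    apply sSup_le
    rintro _ ⟨y, hy, rfl⟩
    show (f y : EReal) ≤ (M : EReal)
    exact_mod_cast hM ⟨y, hy, rfl⟩

lemma bot_lt_sInf_coe_iff {α : Type*} (f : α → ℝ) (S : Set α) :
    ⊥ < sInf ((fun y => (f y : EReal)) '' S) ↔ BddBelow (f '' S) := by
  constructor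
  · intro h
    cases hs : sInf ((fun y => (f y : EReal)) '' S) with
    | top =>
      have : S = ∅ := by
        by_contra hne
        obtain ⟨y, hy⟩ := Set.nonempty_iff_ne_empty.mpr hne
        have hle : (⊤ : EReal) ≤ (f y : EReal) := hs ▸ sInf_le ⟨y, hy, rfl⟩
        exact absurd (top_le_iff.mp hle) (EReal.coe_ne_top _)
      simp [this]
    | bot => simp [hs] at h
    | coe r =>
      refine ⟨r, ?_⟩
      rintro _ ⟨y, hy, rfl⟩
      have hle : (r : EReal) ≤ (f y : EReal) := hs ▸ sInf_le ⟨y, hy, rfl⟩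
      exact_mod_cast hle
  · rintro ⟨M, hM⟩
    refine lt_of_lt_of_le (b := (M : EReal)) (EReal.bot_lt_coe M) ?_
    apply le_sInf
    rintro _ ⟨y, hy, rfl⟩
    show (M : EReal) ≤ (f y : EReal)
    exact_mod_cast hM ⟨y, hy, rfl⟩

/-- For a Pareto set `P`, separable increase (in the extended sense, which here amounts to
`a(x) < ⊤` and `⊥ < b(x)` together with the finite condition) is equivalent to boundedness
of `f_P` above on lower sets and below on upper sets. -/
theorem stmt_12 {k : ℕ} (P : Set (Fin k → ℝ)) (fP : (Fin k → ℝ) → ℝ)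
    (hPareto : ∀ x ∈ P, ∀ y ∈ P, ¬ x < y) :
    ((∀ x x' : Fin k → ℝ, x < x' → aF P fP x < bF P fP x') ∧
      (∀ x : Fin k → ℝ, aF P fP x < ⊤) ∧ (∀ x : Fin k → ℝ, ⊥ < bF P fP x)) ↔
    (∀ c : Fin k → ℝ,
      BddAbove (fP '' {x ∈ P | x ≤ c}) ∧ BddBelow (fP '' {x ∈ P | c ≤ x})) := by
  constructor
  · rintro ⟨_, h2, h3⟩ c
    exact ⟨(sSup_coe_lt_top_iff fP _).mp (h2 c), (bot_lt_sInf_coe_iff fP _).mp (h3 c)⟩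
  · intro h
    refine ⟨?_, fun x => (sSup_coe_lt_top_iff fP _).mpr (h x).1,
      fun x => (bot_lt_sInf_coe_iff fP _).mpr (h x).2⟩
    intro x x' hxx'
    by_cases hL : ({y ∈ P | y ≤ x}).Nonempty
    · by_cases hU : ({z ∈ P | x' ≤ z}).Nonempty
      · obtain ⟨y, hyP, hyx⟩ := hL
        obtain ⟨z, hzP, hzx⟩ := hU
        exact absurd (lt_of_le_of_lt hyx (lt_of_lt_of_le hxx' hzx)) (hPareto y hyP z hzP)
      · have he : {z ∈ P | x' ≤ z} = ∅ := Set.not_nonempty_iff_eq_empty.mp hU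
        have : bF P fP x' = ⊤ := by simp [bF, he]
        rw [this]
        exact (sSup_coe_lt_top_iff fP _).mpr (h x).1
    · have he : {y ∈ P | y ≤ x} = ∅ := Set.not_nonempty_iff_eq_empty.mp hL
      have : aF P fP x = ⊥ := by simp [aF, he]
      rw [this]
      exact (bot_lt_sInf_coe_iff fP _).mpr (h x').2
end

section
/- Let P ⊂ ℝ^k be a Pareto set and let f_P : P → ℝ be upper-bounded on lower sets and lower-bounded on upper sets. Then there exists a strictly increasing (with respect to the Paretian order) function f : ℝ^k → ℝ whose restriction to P equals f_P. -/
open Set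

namespace Stmt13Aux

open Real

noncomputable def phi : EReal → ℝ := fun e =>
  if e = ⊥ then 0 else if e = ⊤ then 1 else arctan e.toReal / π + 1 / 2

lemma phi_bot : phi ⊥ = 0 := by simp [phi]

lemma phi_top : phi ⊤ = 1 := by simp [phi]

lemma phi_coe (r : ℝ) : phi (r : EReal) = arctan r / π + 1 / 2 := by
  simp [phi]

lemma phi_coe_pos (r : ℝ) : 0 < phi (r : EReal) := by
  rw [phi_coe]
  have h1 := Real.neg_pi_div_two_lt_arctan r
  have hπ := Real.pi_pos
  have h2 : -(1 / 2 : ℝ) < arctan r / π := by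
    rw [lt_div_iff₀ hπ]; nlinarith
  linarith

lemma phi_coe_lt_one (r : ℝ) : phi (r : EReal) < 1 := by
  rw [phi_coe]
  have h1 := Real.arctan_lt_pi_div_two r
  have hπ := Real.pi_pos
  have h2 : arctan r / π < 1 / 2 := by
    rw [div_lt_iff₀ hπ]; nlinarith
  linarith

lemma phi_nonneg (e : EReal) : 0 ≤ phi e := by
  induction e using EReal.rec with
  | bot => rw [phi_bot]
  | coe r => exact (phi_coe_pos r).le
  | top => rw [phi_top]; norm_num

lemma phi_le_one (e : EReal) : phi e ≤ 1 := by
  induction e using EReal.rec with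
  | bot => rw [phi_bot]; norm_num
  | coe r => exact (phi_coe_lt_one r).le
  | top => rw [phi_top]

lemma phi_mono : Monotone phi := by
  intro e e' h
  induction e using EReal.rec with
  | bot => rw [phi_bot]; exact phi_nonneg _
  | top => rw [top_le_iff.mp h]
  | coe r =>
    induction e' using EReal.rec with
    | bot => exact absurd h (by simp)
    | top => rw [phi_top]; exact phi_le_one _
    | coe s =>
      rw [phi_coe, phi_coe]
      have harc : arctan r ≤ arctan s :=
        Real.arctan_strictMono.monotone (by exact_mod_cast h)
      have hπ := Real.pi_pos
      have : arctan r / π ≤ arctan s / π := by gcongr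
      linarith

noncomputable def wt (k : ℕ) (x : Fin k → ℝ) : ℝ :=
  (∑ i, arctan (x i)) / ((k : ℝ) * π + 1) + 1 / 2

lemma wt_denom_pos (k : ℕ) : 0 < (k : ℝ) * π + 1 := by positivity

lemma wt_abs (k : ℕ) (x : Fin k → ℝ) : |∑ i, arctan (x i)| ≤ (k : ℝ) * (π / 2) := by
  calc |∑ i, arctan (x i)| ≤ ∑ i, |arctan (x i)| := Finset.abs_sum_le_sum_abs _ _
    _ ≤ ∑ _i : Fin k, (π / 2) := by
        apply Finset.sum_le_sum
        intro i _
        rw [abs_le]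
        exact ⟨(Real.neg_pi_div_two_lt_arctan _).le, (Real.arctan_lt_pi_div_two _).le⟩
    _ = (k : ℝ) * (π / 2) := by simp [Finset.sum_const, mul_comm]

lemma wt_abs_div (k : ℕ) (x : Fin k → ℝ) :
    |(∑ i, arctan (x i)) / ((k : ℝ) * π + 1)| < 1 / 2 := by
  have hd := wt_denom_pos k
  have ha := wt_abs k x
  rw [abs_div, abs_of_pos hd, div_lt_iff₀ hd]
  nlinarith

lemma wt_pos (k : ℕ) (x : Fin k → ℝ) : 0 < wt k x := by
  rcases abs_lt.mp (wt_abs_div k x) with ⟨hl, hr⟩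
  unfold wt
  linarith

lemma wt_lt_one (k : ℕ) (x : Fin k → ℝ) : wt k x < 1 := by
  rcases abs_lt.mp (wt_abs_div k x) with ⟨hl, hr⟩
  unfold wt
  linarith

lemma wt_strictMono (k : ℕ) : StrictMono (wt k) := by
  intro x y hxy
  rw [Pi.lt_def] at hxy
  obtain ⟨hle, i, hi⟩ := hxy
  have hsum : (∑ j, arctan (x j)) < ∑ j, arctan (y j) :=
    Finset.sum_lt_sum (fun j _ => Real.arctan_strictMono.monotone (hle j))
      ⟨i, Finset.mem_univ i, Real.arctan_strictMono hi⟩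
  have hd := wt_denom_pos k
  unfold wt
  have : (∑ j, arctan (x j)) / ((k : ℝ) * π + 1) < (∑ j, arctan (y j)) / ((k : ℝ) * π + 1) := by
    gcongr
  linarith

lemma tan_aux {s t : ℝ} (hs0 : 0 < s) (ht1 : t < 1) (hst : s < t) :
    Real.tan (π * (s - 1 / 2)) < Real.tan (π * (t - 1 / 2)) := by
  have hπ := Real.pi_pos
  apply Real.tan_lt_tan_of_lt_of_lt_pi_div_two
  · nlinarith [mul_pos hπ hs0]
  · nlinarith [mul_lt_mul_of_pos_left ht1 hπ]
  · nlinarith [mul_lt_mul_of_pos_left hst hπ]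

end Stmt13Aux

theorem stmt_13 {k : ℕ} (P : Set (Fin k → ℝ)) (fP : (Fin k → ℝ) → ℝ)
    (hPareto : ∀ x ∈ P, ∀ y ∈ P, ¬ x < y)
    (hbdd : ∀ c : Fin k → ℝ,
      BddAbove (fP '' {x ∈ P | x ≤ c}) ∧ BddBelow (fP '' {x ∈ P | c ≤ x})) :
    ∃ f : (Fin k → ℝ) → ℝ, StrictMono f ∧ ∀ x ∈ P, f x = fP x := by
  classical
  open Real Stmt13Aux in
  set L : (Fin k → ℝ) → Set (Fin k → ℝ) := fun x => {y ∈ P | y ≤ x} with hL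
  set U : (Fin k → ℝ) → Set (Fin k → ℝ) := fun x => {z ∈ P | x ≤ z} with hU
  set a : (Fin k → ℝ) → ℝ := fun x => Stmt13Aux.phi (aF P fP x) with ha
  set b : (Fin k → ℝ) → ℝ := fun x => Stmt13Aux.phi (bF P fP x) with hb
  set w : (Fin k → ℝ) → ℝ := Stmt13Aux.wt k with hw
  set F : (Fin k → ℝ) → ℝ := fun x => a x + w x * (b x - a x) with hF
  -- basic bounds
  have ha01 : ∀ x, 0 ≤ a x ∧ a x ≤ 1 := fun x => ⟨Stmt13Aux.phi_nonneg _, Stmt13Aux.phi_le_one _⟩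
  have hb01 : ∀ x, 0 ≤ b x ∧ b x ≤ 1 := fun x => ⟨Stmt13Aux.phi_nonneg _, Stmt13Aux.phi_le_one _⟩
  have hw01 : ∀ x, 0 < w x ∧ w x < 1 := fun x => ⟨Stmt13Aux.wt_pos k x, Stmt13Aux.wt_lt_one k x⟩
  -- value on P
  have haP : ∀ x ∈ P, aF P fP x = (fP x : EReal) := by
    intro x hx
    have hset : {y ∈ P | y ≤ x} = {x} := by
      ext p
      constructor
      · rintro ⟨hp, hpx⟩
        by_contra hne
        exact hPareto p hp x hx (lt_of_le_of_ne hpx hne)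
      · rintro rfl; exact ⟨hx, le_rfl⟩
    rw [aF, hset, Set.image_singleton, sSup_singleton]
  have hbP : ∀ x ∈ P, bF P fP x = (fP x : EReal) := by
    intro x hx
    have hset : {z ∈ P | x ≤ z} = {x} := by
      ext q
      constructor
      · rintro ⟨hq, hxq⟩
        by_contra hne
        exact hPareto x hx q hq (lt_of_le_of_ne hxq (fun h => hne h.symm))
      · rintro rfl; exact ⟨hx, le_rfl⟩
    rw [bF, hset, Set.image_singleton, sInf_singleton]
  -- empty cases
  have haE : ∀ x, L x = ∅ → a x = 0 := by
    intro x hx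
    have : aF P fP x = ⊥ := by
      rw [aF]
      rw [show {y ∈ P | y ≤ x} = (∅ : Set (Fin k → ℝ)) from hx]
      simp
    rw [ha]; simp only; rw [this, Stmt13Aux.phi_bot]
  have hbE : ∀ x, U x = ∅ → b x = 1 := by
    intro x hx
    have : bF P fP x = ⊤ := by
      rw [bF]
      rw [show {z ∈ P | x ≤ z} = (∅ : Set (Fin k → ℝ)) from hx]
      simp
    rw [hb]; simp only; rw [this, Stmt13Aux.phi_top]
  -- nonempty cases give finite values
  have haNE : ∀ x, (L x).Nonempty → 0 < a x ∧ a x < 1 := by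
    intro x ⟨p, hp⟩
    have h1 : (fP p : EReal) ≤ aF P fP x := le_sSup ⟨p, hp, rfl⟩
    obtain ⟨c, hc⟩ := (hbdd x).1
    have h2 : aF P fP x ≤ (c : EReal) := by
      apply sSup_le
      rintro e ⟨q, hq, rfl⟩
      show ((fP q : ℝ) : EReal) ≤ (c : EReal)
      exact_mod_cast hc ⟨q, hq, rfl⟩
    have hnb : aF P fP x ≠ ⊥ := ((EReal.bot_lt_coe _).trans_le h1).ne'
    have hnt : aF P fP x ≠ ⊤ := (h2.trans_lt (EReal.coe_lt_top c)).ne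
    rw [ha]; simp only; rw [← EReal.coe_toReal hnt hnb]
    exact ⟨Stmt13Aux.phi_coe_pos _, Stmt13Aux.phi_coe_lt_one _⟩
  have hbNE : ∀ x, (U x).Nonempty → 0 < b x ∧ b x < 1 := by
    intro x ⟨q, hq⟩
    have h1 : bF P fP x ≤ (fP q : EReal) := sInf_le ⟨q, hq, rfl⟩
    obtain ⟨c, hc⟩ := (hbdd x).2
    have h2 : (c : EReal) ≤ bF P fP x := by
      apply le_sInf
      rintro e ⟨p, hp, rfl⟩
      show (c : EReal) ≤ ((fP p : ℝ) : EReal)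
      exact_mod_cast hc ⟨p, hp, rfl⟩
    have hnt : bF P fP x ≠ ⊤ := (h1.trans_lt (EReal.coe_lt_top _)).ne
    have hnb : bF P fP x ≠ ⊥ := ((EReal.bot_lt_coe _).trans_le h2).ne'
    rw [hb]; simp only; rw [← EReal.coe_toReal hnt hnb]
    exact ⟨Stmt13Aux.phi_coe_pos _, Stmt13Aux.phi_coe_lt_one _⟩
  -- monotonicity of a and b
  have haM : ∀ x y : Fin k → ℝ, x ≤ y → a x ≤ a y := by
    intro x y hxy
    apply Stmt13Aux.phi_mono
    apply sSup_le_sSup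
    apply Set.image_mono
    rintro p ⟨hp, hpx⟩
    exact ⟨hp, hpx.trans hxy⟩
  have hbM : ∀ x y : Fin k → ℝ, x ≤ y → b x ≤ b y := by
    intro x y hxy
    apply Stmt13Aux.phi_mono
    apply sInf_le_sInf
    apply Set.image_mono
    rintro q ⟨hq, hyq⟩
    exact ⟨hq, hxy.trans hyq⟩
  -- structural facts
  have hboth : ∀ x, (L x).Nonempty → (U x).Nonempty → x ∈ P := by
    rintro x ⟨p, hp, hpx⟩ ⟨q, hq, hxq⟩
    have hpq : p ≤ q := hpx.trans hxq
    rcases eq_or_lt_of_le hpq with heq | hlt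
    · subst heq
      have : x = p := le_antisymm hxq hpx
      rwa [this]
    · exact absurd hlt (hPareto p hp q hq)
  have hnotboth : ∀ x y : Fin k → ℝ, x < y → (L x).Nonempty → (U y).Nonempty → False := by
    rintro x y hxy ⟨p, hp, hpx⟩ ⟨q, hq, hyq⟩
    have hpq : p ≤ q := hpx.trans (hxy.le.trans hyq)
    rcases eq_or_lt_of_le hpq with heq | hlt
    · subst heq
      exact absurd (lt_of_le_of_lt hpx (hxy.trans_le hyq)) (lt_irrefl p)
    · exact hPareto p hp q hq hlt
  -- a = b on P
  have habP : ∀ x ∈ P, a x = b x ∧ a x = Stmt13Aux.phi ((fP x : EReal)) := by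
    intro x hx
    constructor
    · rw [ha, hb]; simp only; rw [haP x hx, hbP x hx]
    · rw [ha]; simp only; rw [haP x hx]
  -- F in (0,1)
  have hF01 : ∀ x, 0 < F x ∧ F x < 1 := by
    intro x
    obtain ⟨hw0, hw1⟩ := hw01 x
    obtain ⟨ha0, ha1⟩ := ha01 x
    obtain ⟨hb0, hb1⟩ := hb01 x
    rcases Set.eq_empty_or_nonempty (L x) with hLx | hLx
    · have hax := haE x hLx
      rcases Set.eq_empty_or_nonempty (U x) with hUx | hUx
      · have hbx := hbE x hUx
        rw [hF]; simp only; rw [hax, hbx]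
        constructor <;> nlinarith
      · obtain ⟨hb0', hb1'⟩ := hbNE x hUx
        rw [hF]; simp only; rw [hax]
        constructor <;> nlinarith
    · obtain ⟨ha0', ha1'⟩ := haNE x hLx
      rcases Set.eq_empty_or_nonempty (U x) with hUx | hUx
      · have hbx := hbE x hUx
        rw [hF]; simp only; rw [hbx]
        constructor <;> nlinarith
      · have hxP := hboth x hLx hUx
        have hab := (habP x hxP).1
        rw [hF]; simp only; rw [← hab]
        constructor <;> nlinarith
  -- key: F strictly monotone
  have hFmono : ∀ x y : Fin k → ℝ, x < y → F x < F y := by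
    intro x y hxy
    obtain ⟨hwx0, hwx1⟩ := hw01 x
    obtain ⟨hwy0, hwy1⟩ := hw01 y
    have hww : w x < w y := Stmt13Aux.wt_strictMono k hxy
    have haxy : a x ≤ a y := haM x y hxy.le
    have hbxy : b x ≤ b y := hbM x y hxy.le
    obtain ⟨hax0, hax1⟩ := ha01 x
    obtain ⟨hay0, hay1⟩ := ha01 y
    obtain ⟨hbx0, hbx1⟩ := hb01 x
    obtain ⟨hby0, hby1⟩ := hb01 y
    rcases Set.eq_empty_or_nonempty (L x) with hLx | hLx
    · have hax := haE x hLx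
      rcases Set.eq_empty_or_nonempty (U y) with hUy | hUy
      · -- a x = 0, b y = 1
        have hby := hbE y hUy
        rw [hF]; simp only; rw [hax, hby]
        nlinarith [mul_nonneg hwx0.le (sub_nonneg.mpr hbx1),
          mul_nonneg hay0 (sub_nonneg.mpr hwy1.le)]
      · -- U y nonempty
        have hUx : (U x).Nonempty := by
          obtain ⟨q, hq, hyq⟩ := hUy
          exact ⟨q, hq, hxy.le.trans hyq⟩
        obtain ⟨hbx0', hbx1'⟩ := hbNE x hUx
        by_cases hyP : y ∈ P
        · -- F y = a y = b y, b x ≤ b y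
          obtain ⟨hab, _⟩ := habP y hyP
          rw [hF]; simp only; rw [hax, ← hab]
          nlinarith
        · -- L y empty, so a y = 0, F y = w y * b y
          have hLy : L y = ∅ := by
            rcases Set.eq_empty_or_nonempty (L y) with h | h
            · exact h
            · exact absurd (hboth y h hUy) hyP
          have hay := haE y hLy
          obtain ⟨hby0', hby1'⟩ := hbNE y hUy
          rw [hF]; simp only; rw [hax, hay]
          nlinarith
    · -- L x nonempty ⇒ U y empty, b y = 1, L y nonempty
      have hUy : U y = ∅ := by
        rcases Set.eq_empty_or_nonempty (U y) with h | h
        · exact h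
        · exact absurd (hnotboth x y hxy hLx h) (fun f => f)
      have hby := hbE y hUy
      have hLy : (L y).Nonempty := by
        obtain ⟨p, hp, hpx⟩ := hLx
        exact ⟨p, hp, hpx.trans hxy.le⟩
      obtain ⟨hay0', hay1'⟩ := haNE y hLy
      obtain ⟨hax0', hax1'⟩ := haNE x hLx
      by_cases hxP : x ∈ P
      · obtain ⟨hab, _⟩ := habP x hxP
        rw [hF]; simp only; rw [← hab, hby]
        nlinarith
      · have hUx : U x = ∅ := by
          rcases Set.eq_empty_or_nonempty (U x) with h | h
          · exact h
          · exact absurd (hboth x hLx h) hxP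
        have hbx := hbE x hUx
        rw [hF]; simp only; rw [hbx, hby]
        nlinarith [mul_pos (sub_pos.mpr hww) (sub_pos.mpr hax1'),
          mul_nonneg (sub_nonneg.mpr haxy) (sub_nonneg.mpr hwy1.le)]
  refine ⟨fun x => Real.tan (Real.pi * (F x - 1 / 2)), ?_, ?_⟩
  · intro x y hxy
    exact Stmt13Aux.tan_aux (hF01 x).1 (hF01 y).2 (hFmono x y hxy)
  · intro x hx
    have hπ := Real.pi_ne_zero
    obtain ⟨hab, haval⟩ := habP x hx
    have hFx : F x = a x := by
      rw [hF]; simp only; rw [← hab]; ring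
    show Real.tan (Real.pi * (F x - 1 / 2)) = fP x
    rw [hFx, haval, Stmt13Aux.phi_coe]
    have : Real.pi * (Real.arctan (fP x) / Real.pi + 1 / 2 - 1 / 2) = Real.arctan (fP x) := by
      field_simp
      ring
    rw [this, Real.tan_arctan]
end
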